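/- arXiv:2309.02440 — 2 statements merged into one kernel-verified Lean document; each statement's English description precedes it below -/
import Mathlib

section
/- Let σ be a divergence-free smooth compactly supported symmetric 2×2 tensor field on ℝ² with support in a bounded set contained in a rectangle of side lengths a and b, and define ψ(x) = ∬_{\{s<x₁, t>x₂\}} σ₁₂(s,t) ds dt. Then there is a constant M depending only on a and b (not on σ) such that ‖ψ‖_{L²} ≤ M ‖σ₁₂‖_{L²}. -/
open MeasureTheory
open scoped ENNReal

noncomputable def pd1 (f : ℝ × ℝ → ℝ) (p : ℝ × ℝ) : ℝ := deriv (fun s => f (s, p.2)) p.1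

noncomputable def pd2 (f : ℝ × ℝ → ℝ) (p : ℝ × ℝ) : ℝ := deriv (fun t => f (p.1, t)) p.2

lemma pd1_eq_fderiv {f : ℝ × ℝ → ℝ} (hf : ContDiff ℝ (⊤ : ℕ∞) f) (p : ℝ × ℝ) :
    pd1 f p = fderiv ℝ f p (1, 0) := by
  have hline : HasDerivAt (fun s : ℝ => (s, p.2)) ((1 : ℝ), (0 : ℝ)) p.1 :=
    (hasDerivAt_id p.1).prodMk (hasDerivAt_const p.1 p.2)
  have hF : HasFDerivAt f (fderiv ℝ f p) ((fun s : ℝ => (s, p.2)) p.1) := by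
    simpa using (hf.differentiable (by simp) p).hasFDerivAt
  have h := hF.comp_hasDerivAt p.1 hline
  simpa [pd1, Function.comp_def] using h.deriv

lemma pd2_eq_fderiv {f : ℝ × ℝ → ℝ} (hf : ContDiff ℝ (⊤ : ℕ∞) f) (p : ℝ × ℝ) :
    pd2 f p = fderiv ℝ f p (0, 1) := by
  have hline : HasDerivAt (fun t : ℝ => (p.1, t)) ((0 : ℝ), (1 : ℝ)) p.2 :=
    (hasDerivAt_const p.2 p.1).prodMk (hasDerivAt_id p.2)
  have hF : HasFDerivAt f (fderiv ℝ f p) ((fun t : ℝ => (p.1, t)) p.2) := by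
    simpa using (hf.differentiable (by simp) p).hasFDerivAt
  have h := hF.comp_hasDerivAt p.2 hline
  simpa [pd2, Function.comp_def] using h.deriv

lemma pd1_cont {f : ℝ × ℝ → ℝ} (hf : ContDiff ℝ (⊤ : ℕ∞) f) : Continuous (pd1 f) :=
  ((hf.continuous_fderiv (by simp)).clm_apply continuous_const).congr
    fun p => (pd1_eq_fderiv hf p).symm

lemma pd2_cont {f : ℝ × ℝ → ℝ} (hf : ContDiff ℝ (⊤ : ℕ∞) f) : Continuous (pd2 f) :=
  ((hf.continuous_fderiv (by simp)).clm_apply continuous_const).congr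
    fun p => (pd2_eq_fderiv hf p).symm

lemma pd1_hcs {f : ℝ × ℝ → ℝ} (hf : ContDiff ℝ (⊤ : ℕ∞) f) (hcs : HasCompactSupport f) :
    HasCompactSupport (pd1 f) := by
  have h : pd1 f = fun p => fderiv ℝ f p (1, 0) := funext (pd1_eq_fderiv hf)
  rw [h]
  exact hcs.fderiv_apply (𝕜 := ℝ) _

lemma pd2_hcs {f : ℝ × ℝ → ℝ} (hf : ContDiff ℝ (⊤ : ℕ∞) f) (hcs : HasCompactSupport f) :
    HasCompactSupport (pd2 f) := by
  have h : pd2 f = fun p => fderiv ℝ f p (0, 1) := funext (pd2_eq_fderiv hf)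
  rw [h]
  exact hcs.fderiv_apply (𝕜 := ℝ) _

lemma integral_deriv_eq_zero' {g : ℝ → ℝ} (hg : ContDiff ℝ 1 g) (hcs : HasCompactSupport g) :
    ∫ x, deriv g x = 0 := by
  have hi : Integrable (deriv g) volume :=
    (hg.continuous_deriv le_rfl).integrable_of_hasCompactSupport hcs.deriv
  have h := intervalIntegral.integral_Iic_add_Ioi (b := (0 : ℝ)) hi.integrableOn hi.integrableOn
  rw [← h, hcs.integral_Iic_deriv_eq hg 0, hcs.integral_Ioi_deriv_eq hg 0]
  ring

/-- Stability estimate for the explicit Airy potential: if the divergence-free smooth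
compactly supported symmetric tensor field `σ` has support in a rectangle of side
lengths `a`, `b`, then the `L²` norm of `ψ(x) = ∬_{s<x₁, t>x₂} σ₁₂` is bounded by a
constant `M = M(a,b)` times the `L²` norm of `σ₁₂`. -/
theorem airy_potential_L2_estimate (a b : ℝ) (ha : 0 < a) (hb : 0 < b) :
    ∃ M : ℝ, 0 < M ∧
      ∀ (c d : ℝ) (σ11 σ12 σ22 : ℝ × ℝ → ℝ),
        ContDiff ℝ (⊤ : ℕ∞) σ11 → ContDiff ℝ (⊤ : ℕ∞) σ12 → ContDiff ℝ (⊤ : ℕ∞) σ22 →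
        HasCompactSupport σ11 → HasCompactSupport σ12 → HasCompactSupport σ22 →
        tsupport σ11 ⊆ Set.Icc c (c + a) ×ˢ Set.Icc d (d + b) →
        tsupport σ12 ⊆ Set.Icc c (c + a) ×ˢ Set.Icc d (d + b) →
        tsupport σ22 ⊆ Set.Icc c (c + a) ×ˢ Set.Icc d (d + b) →
        (∀ p, pd1 σ11 p + pd2 σ12 p = 0) →
        (∀ p, pd1 σ12 p + pd2 σ22 p = 0) →
        ∀ ψ : ℝ × ℝ → ℝ,
          (∀ p : ℝ × ℝ, ψ p = ∫ s in Set.Iio p.1, ∫ t in Set.Ioi p.2, σ12 (s, t)) →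
          eLpNorm ψ 2 volume ≤ ENNReal.ofReal M * eLpNorm σ12 2 volume := by
  refine ⟨a * b, mul_pos ha hb, ?_⟩
  intro c d σ11 σ12 σ22 h11 h12 h22 hc11 hc12 hc22 hs11 hs12 hs22 hdiv1 hdiv2 ψ hψ
  set K : Set (ℝ × ℝ) := Set.Icc c (c + a) ×ˢ Set.Icc d (d + b) with hKdef
  have hKm : MeasurableSet K := measurableSet_Icc.prod measurableSet_Icc
  have hz12 : ∀ p : ℝ × ℝ, p ∉ K → σ12 p = 0 :=
    fun p hp => image_eq_zero_of_notMem_tsupport fun h => hp (hs12 h)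
  have hcont12 : Continuous σ12 := h12.continuous
  have hi12 : Integrable σ12 volume := hcont12.integrable_of_hasCompactSupport hc12
  have hi12p : Integrable σ12 ((volume : Measure ℝ).prod volume) := by
    rwa [← Measure.volume_eq_prod]
  -- integrability on product with restricted second factor
  have hprodInt : ∀ (F : ℝ × ℝ → ℝ), Integrable F ((volume : Measure ℝ).prod volume) →
      ∀ x₂ : ℝ, Integrable F ((volume : Measure ℝ).prod (volume.restrict (Set.Ioi x₂))) := by
    intro F hF x₂
    have h1 : (volume : Measure ℝ).prod (volume.restrict (Set.Ioi x₂)) =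
        ((volume : Measure ℝ).prod volume).restrict (Set.univ ×ˢ Set.Ioi x₂) := by
      rw [← Measure.prod_restrict, Measure.restrict_univ]
    rw [h1]
    exact hF.integrableOn
  have hprodInt' : ∀ (F : ℝ × ℝ → ℝ), Integrable F ((volume : Measure ℝ).prod volume) →
      ∀ x₁ : ℝ, Integrable F (((volume : Measure ℝ).restrict (Set.Ioi x₁)).prod volume) := by
    intro F hF x₁
    have h1 : ((volume : Measure ℝ).restrict (Set.Ioi x₁)).prod volume =
        ((volume : Measure ℝ).prod volume).restrict (Set.Ioi x₁ ×ˢ (Set.univ : Set ℝ)) := by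
      rw [← Measure.prod_restrict, Measure.restrict_univ (μ := (volume : Measure ℝ))]
    rw [h1]
    exact hF.integrableOn
  -- first marginal vanishes
  have hmarg1 : ∀ t : ℝ, (∫ s : ℝ, σ12 (s, t)) = 0 := by
    intro t
    have hc : Continuous (pd1 σ11) := pd1_cont h11
    have hcs : HasCompactSupport (pd1 σ11) := pd1_hcs h11 hc11
    have hint : Integrable (pd1 σ11) ((volume : Measure ℝ).prod volume) := by
      rw [← Measure.volume_eq_prod]
      exact hc.integrable_of_hasCompactSupport hcs
    have hintp := hprodInt (pd1 σ11) hint t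
    have hrepr : ∀ s : ℝ, σ12 (s, t) = ∫ u in Set.Ioi t, pd1 σ11 (s, u) := by
      intro s
      have hslice : ContDiff ℝ 1 fun u => σ12 (s, u) :=
        (h12.comp (contDiff_const.prodMk contDiff_id)).of_le (by simp)
      have hslicecs : HasCompactSupport fun u => σ12 (s, u) :=
        HasCompactSupport.intro isCompact_Icc fun u hu => hz12 (s, u) fun hm => hu hm.2
      have h1 := hslicecs.integral_Ioi_deriv_eq hslice t
      have h2 : ∀ u : ℝ, pd1 σ11 (s, u) = -(deriv (fun v => σ12 (s, v)) u) := by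
        intro u
        have h3 := hdiv1 (s, u)
        have h4 : pd2 σ12 (s, u) = deriv (fun v => σ12 (s, v)) u := rfl
        linarith
      have h5 : (∫ u in Set.Ioi t, pd1 σ11 (s, u)) =
          ∫ u in Set.Ioi t, -(deriv (fun v => σ12 (s, v)) u) :=
        integral_congr_ae (.of_forall fun u => h2 u)
      rw [h5, integral_neg, h1, neg_neg]
    calc (∫ s : ℝ, σ12 (s, t)) = ∫ s : ℝ, ∫ u in Set.Ioi t, pd1 σ11 (s, u) :=
          integral_congr_ae (.of_forall fun s => hrepr s)
      _ = ∫ u in Set.Ioi t, ∫ s : ℝ, pd1 σ11 (s, u) :=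
          integral_integral_swap (f := fun s u => pd1 σ11 (s, u))
            hintp
      _ = 0 := by
          have hz : ∀ u : ℝ, (∫ s : ℝ, pd1 σ11 (s, u)) = 0 := by
            intro u
            have hs2 : ContDiff ℝ 1 fun x => σ11 (x, u) :=
              (h11.comp (contDiff_id.prodMk contDiff_const)).of_le (by simp)
            have hscs : HasCompactSupport fun x => σ11 (x, u) :=
              HasCompactSupport.intro isCompact_Icc fun x hx =>
                image_eq_zero_of_notMem_tsupport fun h => hx (hs11 h).1
            simpa [pd1] using integral_deriv_eq_zero' hs2 hscs
          simp only [hz, integral_zero]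
  -- second marginal vanishes
  have hmarg2 : ∀ s : ℝ, (∫ t : ℝ, σ12 (s, t)) = 0 := by
    intro s
    have hc : Continuous (pd2 σ22) := pd2_cont h22
    have hcs : HasCompactSupport (pd2 σ22) := pd2_hcs h22 hc22
    have hint : Integrable (pd2 σ22) ((volume : Measure ℝ).prod volume) := by
      rw [← Measure.volume_eq_prod]
      exact hc.integrable_of_hasCompactSupport hcs
    have hintp := (hprodInt' (pd2 σ22) hint s).swap
    have hrepr : ∀ t : ℝ, σ12 (s, t) = ∫ u in Set.Ioi s, pd2 σ22 (u, t) := by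
      intro t
      have hslice : ContDiff ℝ 1 fun u => σ12 (u, t) :=
        (h12.comp (contDiff_id.prodMk contDiff_const)).of_le (by simp)
      have hslicecs : HasCompactSupport fun u => σ12 (u, t) :=
        HasCompactSupport.intro isCompact_Icc fun u hu => hz12 (u, t) fun hm => hu hm.1
      have h1 := hslicecs.integral_Ioi_deriv_eq hslice s
      have h2 : ∀ u : ℝ, pd2 σ22 (u, t) = -(deriv (fun v => σ12 (v, t)) u) := by
        intro u
        have h3 := hdiv2 (u, t)
        have h4 : pd1 σ12 (u, t) = deriv (fun v => σ12 (v, t)) u := rfl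
        linarith
      have h5 : (∫ u in Set.Ioi s, pd2 σ22 (u, t)) =
          ∫ u in Set.Ioi s, -(deriv (fun v => σ12 (v, t)) u) :=
        integral_congr_ae (.of_forall fun u => h2 u)
      rw [h5, integral_neg, h1, neg_neg]
    calc (∫ t : ℝ, σ12 (s, t)) = ∫ t : ℝ, ∫ u in Set.Ioi s, pd2 σ22 (u, t) :=
          integral_congr_ae (.of_forall fun t => hrepr t)
      _ = ∫ u in Set.Ioi s, ∫ t : ℝ, pd2 σ22 (u, t) :=
          integral_integral_swap (f := fun t u => pd2 σ22 (u, t))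
            hintp
      _ = 0 := by
          have hz : ∀ u : ℝ, (∫ t : ℝ, pd2 σ22 (u, t)) = 0 := by
            intro u
            have hs2 : ContDiff ℝ 1 fun y => σ22 (u, y) :=
              (h22.comp (contDiff_const.prodMk contDiff_id)).of_le (by simp)
            have hscs : HasCompactSupport fun y => σ22 (u, y) :=
              HasCompactSupport.intro isCompact_Icc fun y hy =>
                image_eq_zero_of_notMem_tsupport fun h => hy (hs22 h).2
            simpa [pd2] using integral_deriv_eq_zero' hs2 hscs
          simp only [hz, integral_zero]
  -- ψ vanishes outside K
  have hψ0 : ∀ p : ℝ × ℝ, p ∉ K → ψ p = 0 := by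
    intro p hp
    rw [hψ p]
    by_cases h1 : p.1 < c
    · have he : Set.EqOn (fun s => ∫ t in Set.Ioi p.2, σ12 (s, t)) (fun _ => (0 : ℝ))
          (Set.Iio p.1) := by
        intro s hs
        have hzz : ∀ t, σ12 (s, t) = 0 := fun t => hz12 (s, t) fun hm => by
          have := hm.1.1
          simp only [Set.mem_Iio] at hs
          linarith
        simp [hzz]
      rw [setIntegral_congr_fun measurableSet_Iio he, integral_zero]
    by_cases h2 : c + a < p.1
    · have hg0 : ∀ s, s ∉ Set.Iio p.1 → (∫ t in Set.Ioi p.2, σ12 (s, t)) = 0 := by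
        intro s hs
        have hzz : ∀ t, σ12 (s, t) = 0 := fun t => hz12 (s, t) fun hm => by
          have := hm.1.2
          simp only [Set.mem_Iio, not_lt] at hs
          linarith
        simp [hzz]
      rw [setIntegral_eq_integral_of_forall_compl_eq_zero hg0]
      rw [integral_integral_swap (f := fun s t => σ12 (s, t))
        (hprodInt σ12 hi12p p.2)]
      simp only [hmarg1, integral_zero]
    by_cases h3 : p.2 < d
    · have hinner : ∀ s : ℝ, (∫ t in Set.Ioi p.2, σ12 (s, t)) = 0 := by
        intro s
        have hg0 : ∀ t, t ∉ Set.Ioi p.2 → σ12 (s, t) = 0 := by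
          intro t ht
          refine hz12 (s, t) fun hm => ?_
          have := hm.2.1
          simp only [Set.mem_Ioi, not_lt] at ht
          linarith
        rw [setIntegral_eq_integral_of_forall_compl_eq_zero hg0, hmarg2 s]
      simp only [hinner, integral_zero]
    by_cases h4 : d + b < p.2
    · have hinner : ∀ s : ℝ, (∫ t in Set.Ioi p.2, σ12 (s, t)) = 0 := by
        intro s
        have he : Set.EqOn (fun t => σ12 (s, t)) (fun _ => (0 : ℝ)) (Set.Ioi p.2) := by
          intro t ht
          refine hz12 (s, t) fun hm => ?_
          have := hm.2.2
          simp only [Set.mem_Ioi] at ht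
          linarith
        rw [setIntegral_congr_fun measurableSet_Ioi he, integral_zero]
      simp only [hinner, integral_zero]
    · exact absurd (⟨⟨not_lt.1 h1, not_lt.1 h2⟩, ⟨not_lt.1 h3, not_lt.1 h4⟩⟩ : p ∈ K) hp
  -- pointwise bound
  set C : ℝ := ∫ q : ℝ × ℝ, |σ12 q| with hCdef
  have hiabs : Integrable (fun q : ℝ × ℝ => |σ12 q|) ((volume : Measure ℝ).prod volume) :=
    hi12p.abs
  have hbound : ∀ p : ℝ × ℝ, |ψ p| ≤ C := by
    intro p
    rw [hψ p]
    have hprod := hprodInt σ12 hi12p p.2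
    have hg' : Integrable (fun s => ∫ t in Set.Ioi p.2, σ12 (s, t)) volume := by
      simpa using hprod.integral_prod_left
    have habs_marg : Integrable (fun s => ∫ t : ℝ, |σ12 (s, t)|) volume := by
      simpa using hiabs.integral_prod_left
    calc |∫ s in Set.Iio p.1, ∫ t in Set.Ioi p.2, σ12 (s, t)|
        ≤ ∫ s in Set.Iio p.1, |∫ t in Set.Ioi p.2, σ12 (s, t)| := by
          simpa [Real.norm_eq_abs] using
            norm_integral_le_integral_norm (μ := volume.restrict (Set.Iio p.1))
              (f := fun s => ∫ t in Set.Ioi p.2, σ12 (s, t))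
      _ ≤ ∫ s : ℝ, |∫ t in Set.Ioi p.2, σ12 (s, t)| :=
          setIntegral_le_integral hg'.abs (.of_forall fun s => abs_nonneg _)
      _ ≤ ∫ s : ℝ, ∫ t : ℝ, |σ12 (s, t)| := by
          refine integral_mono hg'.abs habs_marg fun s => ?_
          have hsliceint : Integrable (fun t => σ12 (s, t)) volume := by
            refine Continuous.integrable_of_hasCompactSupport
              (hcont12.comp (continuous_const.prodMk continuous_id)) ?_
            exact HasCompactSupport.intro isCompact_Icc fun t ht =>
              hz12 (s, t) fun hm => ht hm.2
          calc |∫ t in Set.Ioi p.2, σ12 (s, t)| ≤ ∫ t in Set.Ioi p.2, |σ12 (s, t)| := by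
                simpa [Real.norm_eq_abs] using
                  norm_integral_le_integral_norm (μ := volume.restrict (Set.Ioi p.2))
                    (f := fun t => σ12 (s, t))
            _ ≤ ∫ t : ℝ, |σ12 (s, t)| :=
                setIntegral_le_integral hsliceint.abs (.of_forall fun t => abs_nonneg _)
      _ = C := by
          rw [hCdef, Measure.volume_eq_prod]
          exact (integral_prod _ hiabs).symm
  have hC0 : 0 ≤ C := integral_nonneg fun q => abs_nonneg _
  -- volume of K
  have hKvol : volume K = ENNReal.ofReal (a * b) := by
    rw [hKdef, Measure.volume_eq_prod, Measure.prod_prod, Real.volume_Icc, Real.volume_Icc,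
      add_sub_cancel_left, add_sub_cancel_left, ← ENNReal.ofReal_mul ha.le]
  have hV0 : ENNReal.ofReal (a * b) ≠ 0 := (ENNReal.ofReal_pos.2 (mul_pos ha hb)).ne'
  have hVt : ENNReal.ofReal (a * b) ≠ ⊤ := ENNReal.ofReal_ne_top
  -- from C to eLpNorm σ12 1
  have hC1 : ENNReal.ofReal C = eLpNorm σ12 1 volume := by
    rw [eLpNorm_one_eq_lintegral_enorm, ← ofReal_integral_norm_eq_lintegral_enorm hi12, hCdef]
    simp [Real.norm_eq_abs]
  have hre : eLpNorm σ12 1 volume = eLpNorm σ12 1 (volume.restrict K) := by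
    have hsupp : Function.support σ12 ⊆ K := (subset_tsupport σ12).trans hs12
    conv_lhs => rw [← Set.indicator_eq_self.2 hsupp]
    rw [eLpNorm_indicator_eq_eLpNorm_restrict hKm]
  have h2 : eLpNorm σ12 1 (volume.restrict K) ≤
      eLpNorm σ12 2 (volume.restrict K) *
        (volume.restrict K Set.univ) ^ (1 / (1 : ℝ≥0∞).toReal - 1 / (2 : ℝ≥0∞).toReal) :=
    eLpNorm_le_eLpNorm_mul_rpow_measure_univ one_le_two hcont12.aestronglyMeasurable
  have h3 : eLpNorm σ12 2 (volume.restrict K) ≤ eLpNorm σ12 2 volume :=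
    eLpNorm_mono_measure _ Measure.restrict_le_self
  have huniv : volume.restrict K Set.univ = ENNReal.ofReal (a * b) := by
    rw [Measure.restrict_apply_univ, hKvol]
  have hhalf : (1 / (1 : ℝ≥0∞).toReal - 1 / (2 : ℝ≥0∞).toReal) = (1 / 2 : ℝ) := by
    norm_num
  have hexp2 : ((2 : ℝ≥0∞).toReal)⁻¹ = (1 / 2 : ℝ) := by norm_num
  -- main chain
  have hstep1 : eLpNorm ψ 2 volume = eLpNorm ψ 2 (volume.restrict K) := by
    have hψeq : ψ = K.indicator ψ := by
      funext p
      by_cases hp : p ∈ K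
      · rw [Set.indicator_of_mem hp]
      · rw [Set.indicator_of_notMem hp, hψ0 p hp]
    nth_rewrite 1 [hψeq]
    rw [eLpNorm_indicator_eq_eLpNorm_restrict hKm]
  have hstep2 : eLpNorm ψ 2 (volume.restrict K) ≤
      ENNReal.ofReal (a * b) ^ (1 / 2 : ℝ) * ENNReal.ofReal C := by
    have := eLpNorm_le_of_ae_bound (μ := volume.restrict K) (p := 2) (f := ψ) (C := C)
      (Filter.Eventually.of_forall fun p => by simpa [Real.norm_eq_abs] using hbound p)
    rwa [huniv, hexp2] at this
  have hstep3 : ENNReal.ofReal C ≤ ENNReal.ofReal (a * b) ^ (1 / 2 : ℝ) * eLpNorm σ12 2 volume := by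
    rw [hC1, hre]
    calc eLpNorm σ12 1 (volume.restrict K)
        ≤ eLpNorm σ12 2 (volume.restrict K) *
            (volume.restrict K Set.univ) ^ (1 / (1 : ℝ≥0∞).toReal - 1 / (2 : ℝ≥0∞).toReal) := h2
      _ = eLpNorm σ12 2 (volume.restrict K) * ENNReal.ofReal (a * b) ^ (1 / 2 : ℝ) := by
          rw [huniv, hhalf]
      _ ≤ eLpNorm σ12 2 volume * ENNReal.ofReal (a * b) ^ (1 / 2 : ℝ) := by
          exact mul_le_mul_left h3 _
      _ = ENNReal.ofReal (a * b) ^ (1 / 2 : ℝ) * eLpNorm σ12 2 volume := mul_comm _ _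
  calc eLpNorm ψ 2 volume = eLpNorm ψ 2 (volume.restrict K) := hstep1
    _ ≤ ENNReal.ofReal (a * b) ^ (1 / 2 : ℝ) * ENNReal.ofReal C := hstep2
    _ ≤ ENNReal.ofReal (a * b) ^ (1 / 2 : ℝ) *
        (ENNReal.ofReal (a * b) ^ (1 / 2 : ℝ) * eLpNorm σ12 2 volume) := mul_le_mul_right hstep3 _
    _ = ENNReal.ofReal (a * b) * eLpNorm σ12 2 volume := by
        rw [← mul_assoc, ← ENNReal.rpow_add _ _ hV0 hVt]
        norm_num
end

section
/- Let Ω ⊂ ℝⁿ be a bounded Lipschitz domain containing the support of f ∈ L²(ℝⁿ;Sym²). Suppose on Ω one has the decomposition f = du_Ω + ˢf_Ω with u_Ω ∈ H¹₀(Ω;ℝⁿ) and ∫_Ω (ˢf_Ω)_{ij} ∂φ_i/∂x_j dx = 0 for all φ ∈ H¹(Ω;ℝⁿ) (i.e. the harmonic part vanishes). Then the extensions by zero of u_Ω and ˢf_Ω to ℝⁿ give the unique global Helmholtz decomposition f = du + ˢf on ℝⁿ: the zero-extension of ˢf_Ω is divergence-free on ℝⁿ and the zero-extension of u_Ω lies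 in H¹(ℝⁿ;ℝⁿ) with du equal to the zero-extension of du_Ω. -/
open MeasureTheory Filter

/-- Partial derivative in the `j`-th coordinate direction on `ℝⁿ`. -/
noncomputable def pdir {n : ℕ} (j : Fin n) (f : EuclideanSpace ℝ (Fin n) → ℝ)
    (x : EuclideanSpace ℝ (Fin n)) : ℝ := fderiv ℝ f x (EuclideanSpace.single j 1)

lemma pdir_continuous {n : ℕ} (j : Fin n) {φ : EuclideanSpace ℝ (Fin n) → ℝ}
    (hφ : ContDiff ℝ (⊤ : ℕ∞) φ) : Continuous (pdir j φ) :=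
  (ContinuousLinearMap.apply ℝ ℝ (EuclideanSpace.single j 1)).continuous.comp
    (hφ.continuous_fderiv (by simp))

lemma pdir_hcs {n : ℕ} (j : Fin n) {φ : EuclideanSpace ℝ (Fin n) → ℝ}
    (hφc : HasCompactSupport φ) : HasCompactSupport (pdir j φ) :=
  (hφc.fderiv (𝕜 := ℝ)).comp_left (g := fun L : _ →L[ℝ] ℝ => L (EuclideanSpace.single j 1)) rfl

lemma pdir_eq_zero {n : ℕ} {j : Fin n} {φ : EuclideanSpace ℝ (Fin n) → ℝ}
    {x : EuclideanSpace ℝ (Fin n)} (hx : x ∉ tsupport φ) : pdir j φ x = 0 := by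
  have h : fderiv ℝ φ x = 0 := by
    by_contra h
    exact hx (support_fderiv_subset ℝ (Function.mem_support.mpr h))
  simp [pdir, h]

lemma memL2_int_mul {α : Type*} [MeasurableSpace α] {μ : Measure α} {f g : α → ℝ}
    (hf : MemLp f 2 μ) (hg : MemLp g 2 μ) : Integrable (fun x => f x * g x) μ := by
  have h := (hf.integrable_sq.add hg.integrable_sq).div_const 2
  refine h.mono' (hf.1.mul hg.1) (Eventually.of_forall fun x => ?_)
  simp only [Real.norm_eq_abs, Pi.add_apply]
  nlinarith [sq_nonneg (|f x| - |g x|), sq_abs (f x), sq_abs (g x), abs_mul (f x) (g x),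
    abs_nonneg (f x * g x), neg_abs_le (f x * g x)]

lemma integral_mul_le_sqrt {α : Type*} [MeasurableSpace α] {μ : Measure α} {f g : α → ℝ}
    (hf : MemLp f 2 μ) (hg : MemLp g 2 μ) :
    |∫ x, f x * g x ∂μ| ≤ (∫ x, f x ^ 2 ∂μ) ^ (1/2 : ℝ) * (∫ x, g x ^ 2 ∂μ) ^ (1/2 : ℝ) := by
  have h22 : Real.HolderConjugate 2 2 := Real.HolderConjugate.two_two
  have h1 : |∫ x, f x * g x ∂μ| ≤ ∫ x, |f x| * |g x| ∂μ := by
    simpa [Real.norm_eq_abs, abs_mul] using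
      norm_integral_le_integral_norm (fun x => f x * g x) (μ := μ)
  have h2 := integral_mul_le_Lp_mul_Lq_of_nonneg h22
    (f := fun x => |f x|) (g := fun x => |g x|)
    (Eventually.of_forall fun x => abs_nonneg (f x)) (Eventually.of_forall fun x => abs_nonneg (g x))
    (by rw [show ENNReal.ofReal (2:ℝ) = 2 by norm_num]; exact hf.abs)
    (by rw [show ENNReal.ofReal (2:ℝ) = 2 by norm_num]; exact hg.abs)
  simp_rw [show ((2:ℝ)) = ((2:ℕ):ℝ) by norm_num, Real.rpow_natCast, sq_abs] at h2
  exact h1.trans (by exact_mod_cast h2)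

/-- Lemma 1 (forward direction): if on a bounded domain `Ω` containing the support of
`f` one has `f = du_Ω + ˢf_Ω` with `u_Ω ∈ H¹₀(Ω)` (weak gradient `g`) and `ˢf_Ω`
satisfying the weak no-flux condition (vanishing harmonic part), then the extensions by
zero (here: `u`, `g`, `sf` vanish outside `Ω`) give the global Helmholtz decomposition on
`ℝⁿ`: `sf` is divergence-free on `ℝⁿ`, `u ∈ H¹(ℝⁿ)` with weak gradient `g`, and
`f = du + ˢf` a.e. on `ℝⁿ`. -/
theorem helmholtz_bounded_to_global {n : ℕ}
    (Ω : Set (EuclideanSpace ℝ (Fin n))) (hΩo : IsOpen Ω) (hΩb : Bornology.IsBounded Ω)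
    (f sf : EuclideanSpace ℝ (Fin n) → Matrix (Fin n) (Fin n) ℝ)
    (u : EuclideanSpace ℝ (Fin n) → Fin n → ℝ)
    (g : EuclideanSpace ℝ (Fin n) → Matrix (Fin n) (Fin n) ℝ)
    (hfL2 : ∀ i j, MemLp (fun x => f x i j) 2 volume)
    (hfsymm : ∀ x i j, f x i j = f x j i)
    (hfsupp : ∀ x, x ∉ Ω → ∀ i j, f x i j = 0)
    (huL2 : ∀ i, MemLp (fun x => u x i) 2 volume)
    (hgL2 : ∀ i j, MemLp (fun x => g x i j) 2 volume)
    -- u, g, sf are the extensions by zero of fields on Ω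
    (husupp : ∀ x, x ∉ Ω → ∀ i, u x i = 0)
    (hgsupp : ∀ x, x ∉ Ω → ∀ i j, g x i j = 0)
    (hsfsupp : ∀ x, x ∉ Ω → ∀ i j, sf x i j = 0)
    -- g is the weak gradient of u on Ω
    (hweakΩ : ∀ (φ : EuclideanSpace ℝ (Fin n) → ℝ), ContDiff ℝ (⊤ : ℕ∞) φ →
      HasCompactSupport φ → tsupport φ ⊆ Ω →
      ∀ i j, ∫ x in Ω, u x i * pdir j φ x = -∫ x in Ω, g x i j * φ x)
    -- u_Ω ∈ H¹₀(Ω): H¹(Ω)-limit of smooth fields compactly supported in Ω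
    (hH10 : ∃ v : ℕ → EuclideanSpace ℝ (Fin n) → Fin n → ℝ,
      (∀ k i, ContDiff ℝ (⊤ : ℕ∞) (fun x => v k x i) ∧
        HasCompactSupport (fun x => v k x i) ∧ tsupport (fun x => v k x i) ⊆ Ω) ∧
      Tendsto (fun k => ∫ x in Ω,
          ((∑ i, (u x i - v k x i) ^ 2)
            + ∑ i, ∑ j, (g x i j - pdir j (fun y => v k y i) x) ^ 2))
        atTop (nhds 0))
    -- decomposition f = du_Ω + ˢf_Ω on Ω with vanishing harmonic part
    (hdecompΩ : ∀ᵐ x ∂volume, x ∈ Ω → ∀ i j, f x i j = (g x i j + g x j i) / 2 + sf x i j)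
    (hnoflux : ∀ (φ : EuclideanSpace ℝ (Fin n) → Fin n → ℝ),
      (∀ i, ContDiff ℝ (⊤ : ℕ∞) (fun x => φ x i)) →
      ∫ x in Ω, ∑ i, ∑ j, sf x i j * pdir j (fun y => φ y i) x = 0) :
    -- sf extended by zero is divergence-free on ℝⁿ
    (∀ (φ : EuclideanSpace ℝ (Fin n) → Fin n → ℝ),
        (∀ i, ContDiff ℝ (⊤ : ℕ∞) (fun x => φ x i)) → (∀ i, HasCompactSupport (fun x => φ x i)) →
        ∫ x, ∑ i, ∑ j, sf x i j * pdir j (fun y => φ y i) x = 0)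
    ∧ -- u extended by zero is in H¹(ℝⁿ) with weak gradient g
    (∀ (φ : EuclideanSpace ℝ (Fin n) → ℝ), ContDiff ℝ (⊤ : ℕ∞) φ → HasCompactSupport φ →
        ∀ i j, ∫ x, u x i * pdir j φ x = -∫ x, g x i j * φ x)
    ∧ -- the global decomposition f = du + ˢf holds a.e. on ℝⁿ
    (∀ᵐ x ∂volume, ∀ i j, f x i j = (g x i j + g x j i) / 2 + sf x i j) := by
  refine ⟨?_, ?_, ?_⟩
  · -- divergence-free
    intro φ hφ hφc
    have h : ∀ x, x ∉ Ω → (∑ i, ∑ j, sf x i j * pdir j (fun y => φ y i) x) = 0 := by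
      intro x hx
      simp [hsfsupp x hx]
    rw [← setIntegral_eq_integral_of_forall_compl_eq_zero h]
    exact hnoflux φ hφ
  · -- weak gradient
    intro φ hφ hφc i j
    obtain ⟨v, hv, hlim⟩ := hH10
    have hφcont : Continuous φ := hφ.continuous
    have hwcont : Continuous (pdir j φ) := pdir_continuous j hφ
    have hwcs : HasCompactSupport (pdir j φ) := pdir_hcs j hφc
    have hui : MemLp (fun x => u x i) 2 (volume.restrict Ω) := (huL2 i).restrict Ω
    have hgij : MemLp (fun x => g x i j) 2 (volume.restrict Ω) := (hgL2 i j).restrict Ω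
    have hwL2 : MemLp (pdir j φ) 2 (volume.restrict Ω) := (hwcont.memLp_of_hasCompactSupport hwcs).restrict Ω
    have hφL2 : MemLp φ 2 (volume.restrict Ω) := (hφcont.memLp_of_hasCompactSupport hφc).restrict Ω
    have hvL2 : ∀ k i', MemLp (fun x => v k x i') 2 (volume.restrict Ω) := fun k i' =>
      (((hv k i').1.continuous).memLp_of_hasCompactSupport (hv k i').2.1).restrict Ω
    have hdvL2 : ∀ k i' j', MemLp (pdir j' (fun y => v k y i')) 2 (volume.restrict Ω) := fun k i' j' =>
      ((pdir_continuous j' (hv k i').1).memLp_of_hasCompactSupport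
        (pdir_hcs j' (hv k i').2.1)).restrict Ω
    have hu_eq : ∫ x, u x i * pdir j φ x = ∫ x in Ω, u x i * pdir j φ x :=
      (setIntegral_eq_integral_of_forall_compl_eq_zero fun x hx => by
        rw [husupp x hx i, zero_mul]).symm
    have hg_eq : ∫ x, g x i j * φ x = ∫ x in Ω, g x i j * φ x :=
      (setIntegral_eq_integral_of_forall_compl_eq_zero fun x hx => by
        rw [hgsupp x hx i j, zero_mul]).symm
    rw [hu_eq, hg_eq]
    have per_k : ∀ k, ∫ x in Ω, v k x i * pdir j φ x
        = -∫ x in Ω, pdir j (fun y => v k y i) x * φ x := by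
      intro k
      obtain ⟨hsm, hcs, hsub⟩ := hv k i
      have h1 : ∫ x in Ω, v k x i * pdir j φ x = ∫ x, v k x i * pdir j φ x :=
        setIntegral_eq_integral_of_forall_compl_eq_zero fun x hx => by
          rw [image_eq_zero_of_notMem_tsupport (fun h => hx (hsub h)), zero_mul]
      have h2 : ∫ x in Ω, pdir j (fun y => v k y i) x * φ x
          = ∫ x, pdir j (fun y => v k y i) x * φ x :=
        setIntegral_eq_integral_of_forall_compl_eq_zero fun x hx => by
          rw [pdir_eq_zero (fun h => hx (hsub h)), zero_mul]
      rw [h1, h2]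
      have hdvc : Continuous (pdir j (fun y => v k y i)) := pdir_continuous j hsm
      have hdvcs : HasCompactSupport (pdir j (fun y => v k y i)) := pdir_hcs j hcs
      have i1 : Integrable (fun x => pdir j (fun y => v k y i) x * φ x) volume :=
        (hdvc.mul hφcont).integrable_of_hasCompactSupport hdvcs.mul_right
      have i2 : Integrable (fun x => v k x i * pdir j φ x) volume :=
        (hsm.continuous.mul hwcont).integrable_of_hasCompactSupport hcs.mul_right
      have i3 : Integrable (fun x => v k x i * φ x) volume :=
        (hsm.continuous.mul hφcont).integrable_of_hasCompactSupport hcs.mul_right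
      exact integral_mul_fderiv_eq_neg_fderiv_mul_of_integrable i1 i2 i3
        (fun x _ => (hsm.differentiable (by simp)) x) (fun x _ => (hφ.differentiable (by simp)) x)
    set εs : ℕ → ℝ := fun k => ∫ x in Ω,
        ((∑ i', (u x i' - v k x i') ^ 2)
          + ∑ i', ∑ j', (g x i' j' - pdir j' (fun y => v k y i') x) ^ 2) with hεs
    have hε0 : Tendsto εs atTop (nhds 0) := hlim
    have hbigint : ∀ k, Integrable (fun x =>
        ((∑ i', (u x i' - v k x i') ^ 2)
          + ∑ i', ∑ j', (g x i' j' - pdir j' (fun y => v k y i') x) ^ 2)) (volume.restrict Ω) := by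
      intro k
      refine Integrable.add ?_ ?_
      · exact integrable_finset_sum _ fun i' _ =>
          (((huL2 i').restrict Ω).sub (hvL2 k i')).integrable_sq
      · exact integrable_finset_sum _ fun i' _ => integrable_finset_sum _ fun j' _ =>
          (((hgL2 i' j').restrict Ω).sub (hdvL2 k i' j')).integrable_sq
    have hεu : ∀ k, ∫ x in Ω, (u x i - v k x i) ^ 2 ≤ εs k := by
      intro k
      refine integral_mono ((hui.sub (hvL2 k i)).integrable_sq) (hbigint k) fun x => ?_
      have h1 : (u x i - v k x i) ^ 2 ≤ ∑ i', (u x i' - v k x i') ^ 2 :=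
        Finset.single_le_sum (f := fun i' => (u x i' - v k x i') ^ 2)
          (fun i' _ => sq_nonneg _) (Finset.mem_univ i)
      exact h1.trans (le_add_of_nonneg_right (Finset.sum_nonneg fun _ _ =>
        Finset.sum_nonneg fun _ _ => sq_nonneg _))
    have hεg : ∀ k, ∫ x in Ω, (g x i j - pdir j (fun y => v k y i) x) ^ 2 ≤ εs k := by
      intro k
      refine integral_mono ((hgij.sub (hdvL2 k i j)).integrable_sq) (hbigint k) fun x => ?_
      have h1 : (g x i j - pdir j (fun y => v k y i) x) ^ 2
          ≤ ∑ j', (g x i j' - pdir j' (fun y => v k y i) x) ^ 2 :=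
        Finset.single_le_sum (f := fun j' => (g x i j' - pdir j' (fun y => v k y i) x) ^ 2)
          (fun _ _ => sq_nonneg _) (Finset.mem_univ j)
      have h2 : (∑ j', (g x i j' - pdir j' (fun y => v k y i) x) ^ 2)
          ≤ ∑ i', ∑ j', (g x i' j' - pdir j' (fun y => v k y i') x) ^ 2 :=
        Finset.single_le_sum (f := fun i' => ∑ j', (g x i' j' - pdir j' (fun y => v k y i') x) ^ 2)
          (fun _ _ => Finset.sum_nonneg fun _ _ => sq_nonneg _) (Finset.mem_univ i)
      exact (h1.trans h2).trans (le_add_of_nonneg_left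
        (Finset.sum_nonneg fun _ _ => sq_nonneg _))
    have key : ∀ (h : ℕ → EuclideanSpace ℝ (Fin n) → ℝ) (ψ : EuclideanSpace ℝ (Fin n) → ℝ),
        (∀ k, MemLp (h k) 2 (volume.restrict Ω)) → MemLp ψ 2 (volume.restrict Ω) →
        (∀ k, ∫ x in Ω, (h k x) ^ 2 ≤ εs k) →
        Tendsto (fun k => ∫ x in Ω, h k x * ψ x) atTop (nhds 0) := by
      intro h ψ hh hψ hb
      have hC : Tendsto (fun k => (εs k) ^ (1/2:ℝ) * (∫ x in Ω, ψ x ^ 2) ^ (1/2:ℝ))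
          atTop (nhds 0) := by
        have := (hε0.rpow_const (p := 1/2) (Or.inr (by norm_num))).mul_const
          ((∫ x in Ω, ψ x ^ 2) ^ (1/2:ℝ))
        simpa [Real.zero_rpow (by norm_num : (1/2:ℝ) ≠ 0)] using this
      refine squeeze_zero_norm (fun k => ?_) hC
      calc ‖∫ x in Ω, h k x * ψ x‖ = |∫ x in Ω, h k x * ψ x| := Real.norm_eq_abs _
        _ ≤ (∫ x in Ω, h k x ^ 2) ^ (1/2:ℝ) * (∫ x in Ω, ψ x ^ 2) ^ (1/2:ℝ) :=
            integral_mul_le_sqrt (hh k) hψ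
        _ ≤ (εs k) ^ (1/2:ℝ) * (∫ x in Ω, ψ x ^ 2) ^ (1/2:ℝ) := by
            refine mul_le_mul_of_nonneg_right ?_
              (Real.rpow_nonneg (integral_nonneg fun x => sq_nonneg _) _)
            exact Real.rpow_le_rpow (integral_nonneg fun x => sq_nonneg _) (hb k) (by norm_num)
    have hA : Tendsto (fun k => ∫ x in Ω, v k x i * pdir j φ x) atTop
        (nhds (∫ x in Ω, u x i * pdir j φ x)) := by
      have hdiff : ∀ k, MemLp (fun x => u x i - v k x i) 2 (volume.restrict Ω) := fun k =>
        hui.sub (hvL2 k i)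
      have herr := key (fun k x => u x i - v k x i) (pdir j φ) hdiff hwL2 hεu
      have heq : ∀ k, ∫ x in Ω, v k x i * pdir j φ x
          = (∫ x in Ω, u x i * pdir j φ x) - ∫ x in Ω, (u x i - v k x i) * pdir j φ x := by
        intro k
        rw [← integral_sub (memL2_int_mul hui hwL2) (memL2_int_mul (hdiff k) hwL2)]
        exact integral_congr_ae (Eventually.of_forall fun x => by ring)
      simp_rw [heq]
      have hconst : Tendsto (fun _ : ℕ => ∫ x in Ω, u x i * pdir j φ x) atTop
          (nhds (∫ x in Ω, u x i * pdir j φ x)) := tendsto_const_nhds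
      simpa using hconst.sub herr
    have hB : Tendsto (fun k => ∫ x in Ω, pdir j (fun y => v k y i) x * φ x) atTop
        (nhds (∫ x in Ω, g x i j * φ x)) := by
      have hdiff : ∀ k, MemLp (fun x => g x i j - pdir j (fun y => v k y i) x) 2 (volume.restrict Ω) :=
        fun k => hgij.sub (hdvL2 k i j)
      have herr := key (fun k x => g x i j - pdir j (fun y => v k y i) x) φ hdiff hφL2 hεg
      have heq : ∀ k, ∫ x in Ω, pdir j (fun y => v k y i) x * φ x
          = (∫ x in Ω, g x i j * φ x)
            - ∫ x in Ω, (g x i j - pdir j (fun y => v k y i) x) * φ x := by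
        intro k
        rw [← integral_sub (memL2_int_mul hgij hφL2) (memL2_int_mul (hdiff k) hφL2)]
        exact integral_congr_ae (Eventually.of_forall fun x => by ring)
      simp_rw [heq]
      have hconst : Tendsto (fun _ : ℕ => ∫ x in Ω, g x i j * φ x) atTop
          (nhds (∫ x in Ω, g x i j * φ x)) := tendsto_const_nhds
      simpa using hconst.sub herr
    exact tendsto_nhds_unique hA (hB.neg.congr fun k => (per_k k).symm)
  · -- decomposition
    filter_upwards [hdecompΩ] with x hx i j
    by_cases hxΩ : x ∈ Ω
    · exact hx hxΩ i j
    · rw [hfsupp x hxΩ i j, hgsupp x hxΩ i j, hgsupp x hxΩ j i, hsfsupp x hxΩ i j]; ring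
end
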